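/- arXiv:2010.15271 — 2 statements merged into one kernel-verified Lean document; each statement's English description precedes it below -/
import Mathlib

section
/- If $u_c \in \mathring{H}^1_m$ is a critical point of the Ohta-Kawasaki energy ($DF(u_c) \equiv 0$ on $\mathring{H}^1$) and $\Omega$ has a $C^{r,1}$ boundary with $r \geq 1$ and satisfies the cone condition, then $u_c \in H^{r+1}(\Omega)$. -/
/-!
Bootstrap: if `u ∈ H^{p+1}` then the right-hand side `s - κ(u³ - u) - σ w` of the elliptic
equation lies in `H^p` (Sobolev embedding for `p = 0`, the algebra property of `H^{p+1}`
otherwise, and `w = G(u - m)` gains two derivatives), so elliptic regularity of `G` gives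
`u ∈ H^{p+2}`. Starting from `u ∈ H¹`, this climbs one step at a time up to `H^{r+1}`.
-/

theorem Submodule.algebraMap_mem_of_one_mem {R A : Type*} [CommSemiring R] [Semiring A]
    [Algebra R A] {S : Submodule R A} (h : 1 ∈ S) (c : R) : algebraMap R A c ∈ S := by
  simpa only [Algebra.algebraMap_eq_smul_one] using S.smul_mem c h

section Bootstrap

variable {V : Type*} [CommRing V] [Algebra ℝ V] {H : ℕ → Submodule ℝ V}

theorem pow_three_mem_of_mem_succ (hmono : ∀ k, H (k + 1) ≤ H k)
    (hcube0 : ∀ v ∈ H 1, v ^ 3 ∈ H 0) (hcube : ∀ k, 2 ≤ k → ∀ v ∈ H k, v ^ 3 ∈ H k)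
    {p : ℕ} {v : V} (hv : v ∈ H (p + 1)) : v ^ 3 ∈ H p := by
  rcases p with _ | p
  · exact hcube0 v hv
  · exact hmono _ (hcube (p + 2) (by omega) v hv)

theorem mem_of_smul_eq_add_algebraMap {p : ℕ} (hconst : (1 : V) ∈ H (p + 2)) {G : V → V}
    (hG : ∀ f ∈ H p, G f ∈ H (p + 2)) {f u : V} (hf : f ∈ H p) {a c : ℝ} (ha : a ≠ 0)
    (heq : a • u = G f + algebraMap ℝ V c) : u ∈ H (p + 2) := by
  have hau : a • u ∈ H (p + 2) := by
    rw [heq]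
    exact add_mem (hG f hf) (Submodule.algebraMap_mem_of_one_mem hconst c)
  simpa only [inv_smul_smul₀ ha] using (H (p + 2)).smul_mem a⁻¹ hau

end Bootstrap

theorem stmt2_general {V : Type*} [CommRing V] [Algebra ℝ V]
    (H : ℕ → Submodule ℝ V)
    (hmono : ∀ k, H (k + 1) ≤ H k)
    (hconst : ∀ k, (1 : V) ∈ H k)
    (r : ℕ)
    (G : V → V)
    (hG : ∀ k, k + 2 ≤ r + 1 → ∀ f ∈ H k, G f ∈ H (k + 2))
    (hcube0 : ∀ v ∈ H 1, v ^ 3 ∈ H 0)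
    (hcube : ∀ k, 2 ≤ k → ∀ v ∈ H k, v ^ 3 ∈ H k)
    (κ ε σ m s : ℝ) (hε : 0 < ε)
    (u w : V)
    (hu : u ∈ H 1)
    (hw : w = G (u - algebraMap ℝ V m))
    (heq : ε ^ 2 • u =
      G (algebraMap ℝ V s - κ • (u ^ 3 - u) - σ • w) + algebraMap ℝ V m) :
    u ∈ H (r + 1) := by
  have hanti : Antitone H := antitone_nat_of_succ_le hmono
  have step : ∀ p, p + 2 ≤ r + 1 → u ∈ H (p + 1) → u ∈ H (p + 2) := by
    intro p hp hup
    have hup' : u ∈ H p := hmono p hup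
    have hwp : w ∈ H p := by
      have hshift : u - algebraMap ℝ V m ∈ H p :=
        sub_mem hup' (Submodule.algebraMap_mem_of_one_mem (hconst p) m)
      exact hanti (Nat.le_add_right p 2) (hw ▸ hG p hp _ hshift)
    have hrhs : algebraMap ℝ V s - κ • (u ^ 3 - u) - σ • w ∈ H p :=
      sub_mem (sub_mem (Submodule.algebraMap_mem_of_one_mem (hconst p) s)
          ((H p).smul_mem κ
            (sub_mem (pow_three_mem_of_mem_succ hmono hcube0 hcube hup) hup')))
        ((H p).smul_mem σ hwp)
    exact mem_of_smul_eq_add_algebraMap (hconst _) (hG p hp) hrhs (by positivity) heq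
  have climb : ∀ n, n ≤ r → u ∈ H (n + 1) := by
    intro n
    induction n with
    | zero => exact fun _ => hu
    | succ n ih => exact fun hn => step n (by omega) (ih (by omega))
  exact climb r le_rfl

theorem stmt2 {V : Type*} [CommRing V] [Algebra ℝ V]
    (H : ℕ → Submodule ℝ V)
    (hmono : ∀ k, H (k + 1) ≤ H k)
    (hconst : ∀ k, (1 : V) ∈ H k)
    (r : ℕ) (hr : 1 ≤ r)
    (G : V → V)
    (hG : ∀ k, k + 2 ≤ r + 1 → ∀ f ∈ H k, G f ∈ H (k + 2))
    (hcube0 : ∀ v ∈ H 1, v ^ 3 ∈ H 0)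
    (hcube : ∀ k, 2 ≤ k → ∀ v ∈ H k, v ^ 3 ∈ H k)
    (κ ε σ m s : ℝ) (hκ : 0 < κ) (hε : 0 < ε) (hσ : 0 < σ)
    (hm : -1 < m ∧ m < 1)
    (u w : V)
    (hu : u ∈ H 1)
    (hw : w = G (u - algebraMap ℝ V m))
    (heq : ε ^ 2 • u =
      G (algebraMap ℝ V s - κ • (u ^ 3 - u) - σ • w) + algebraMap ℝ V m) :
    u ∈ H (r + 1) :=
  stmt2_general H hmono hconst r G hG hcube0 hcube κ ε σ m s hε u w hu hw heq
end

section
/- There exists a constant $\gamma_c = \epsilon^2/(c_p^2 \kappa) > 0$, where $c_p$ is the Poincaré-Wirtinger constant of $\Omega$, such that for all $\gamma \in [0, \gamma_c)$ the modified Hessian $H_\gamma(u)$ is coercive on $\mathring{H}^1$ at every $u \in \mathring{H}^1_m$: $\langle H_\gamma(u)\tilde u_0, \tilde u_0\rangle \geq (\epsilon^2 - c_p^2 \kappa \gamma)\|\nabla\tilde u_0\|_{L^2}^2$ for all $\tilde u_0 \in \mathring{H}^1$. -/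
open MeasureTheory

/-!
Since `u² ≥ 0`, the modified double-well weight `κ(2u² + γ(u² - 1))` is bounded below by `-κγ`,
so the potential term is at least `-κγ‖v‖²_{L²} ≥ -c_p²κγ‖∇v‖²_{L²}` by Poincaré–Wirtinger.
The nonlocal term is nonnegative, leaving `(ε² - c_p²κγ)‖∇v‖²`, and `γ < ε²/(c_p²κ)` makes
this constant positive.
-/

theorem neg_mul_integral_sq_le_integral_modifiedWell {Ω : Type*} [MeasurableSpace Ω]
    {μ : Measure Ω} {κ γ : ℝ} (hκ : 0 ≤ κ) (hγ : 0 ≤ γ) {u v : Ω → ℝ}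
    (huv : Integrable (fun x => u x ^ 2 * v x ^ 2) μ) (hv : Integrable (fun x => v x ^ 2) μ) :
    -(κ * γ) * ∫ x, v x ^ 2 ∂μ ≤ ∫ x, κ * (2 * u x ^ 2 + γ * (u x ^ 2 - 1)) * v x ^ 2 ∂μ := by
  have hsplit : ∀ x, κ * (2 * u x ^ 2 + γ * (u x ^ 2 - 1)) * v x ^ 2
      = -(κ * γ) * v x ^ 2 + κ * (2 + γ) * (u x ^ 2 * v x ^ 2) := fun x => by ring
  simp_rw [hsplit]
  rw [integral_add (hv.const_mul _) (huv.const_mul _), integral_const_mul, integral_const_mul]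
  have hcross : 0 ≤ κ * (2 + γ) * ∫ x, u x ^ 2 * v x ^ 2 ∂μ :=
    mul_nonneg (mul_nonneg hκ (by linarith)) (integral_nonneg fun x => by positivity)
  linarith

theorem stmt10_general {Ω : Type*} [MeasurableSpace Ω] (μ : Measure Ω)
    {W X : Type*} [NormedAddCommGroup W] [InnerProductSpace ℝ W]
    [NormedAddCommGroup X] [InnerProductSpace ℝ X]
    (grad : (Ω → ℝ) →ₗ[ℝ] W) (Rm : (Ω → ℝ) →ₗ[ℝ] X)
    (κ ε σ : ℝ) (hκ : 0 < κ) (hσ : 0 < σ)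
    (cp : ℝ) (hcp : 0 < cp)
    (H1z : Set (Ω → ℝ))
    (hpoin : ∀ w ∈ H1z, (∫ x, (w x) ^ 2 ∂μ) ≤ cp ^ 2 * ‖grad w‖ ^ 2)
    (γ : ℝ) (hγ0 : 0 ≤ γ) (hγc : γ < ε ^ 2 / (cp ^ 2 * κ))
    (u v : Ω → ℝ) (hv : v ∈ H1z)
    (hint : Integrable (fun x => (u x) ^ 2 * (v x) ^ 2) μ)
    (hint2 : Integrable (fun x => (v x) ^ 2) μ) :
    0 < ε ^ 2 - cp ^ 2 * κ * γ ∧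
    (ε ^ 2 - cp ^ 2 * κ * γ) * ‖grad v‖ ^ 2 ≤
      (∫ x, κ * (2 * (u x) ^ 2 + γ * ((u x) ^ 2 - 1)) * (v x) ^ 2 ∂μ)
        + ε ^ 2 * ‖grad v‖ ^ 2 + σ * ‖Rm v‖ ^ 2 := by
  refine ⟨sub_pos.mpr ((lt_div_iff₀' (by positivity)).mp hγc), ?_⟩
  have hwell := neg_mul_integral_sq_le_integral_modifiedWell hκ.le hγ0 hint hint2
  have hpoin_v := mul_le_mul_of_nonneg_left (hpoin v hv) (mul_nonneg hκ.le hγ0)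
  have hnonlocal : 0 ≤ σ * ‖Rm v‖ ^ 2 := by positivity
  linarith

theorem stmt10 {Ω : Type*} [MeasurableSpace Ω] (μ : Measure Ω)
    {W X : Type*} [NormedAddCommGroup W] [InnerProductSpace ℝ W]
    [NormedAddCommGroup X] [InnerProductSpace ℝ X]
    (grad : (Ω → ℝ) →ₗ[ℝ] W) (Rm : (Ω → ℝ) →ₗ[ℝ] X)
    (κ ε σ : ℝ) (hκ : 0 < κ) (hε : 0 < ε) (hσ : 0 < σ)
    (cp : ℝ) (hcp : 0 < cp)
    (H1m H1z : Set (Ω → ℝ))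
    (hpoin : ∀ w ∈ H1z, (∫ x, (w x) ^ 2 ∂μ) ≤ cp ^ 2 * ‖grad w‖ ^ 2)
    (γ : ℝ) (hγ0 : 0 ≤ γ) (hγc : γ < ε ^ 2 / (cp ^ 2 * κ))
    (u v : Ω → ℝ) (hu : u ∈ H1m) (hv : v ∈ H1z)
    (hint : Integrable (fun x => (u x) ^ 2 * (v x) ^ 2) μ)
    (hint2 : Integrable (fun x => (v x) ^ 2) μ) :
    0 < ε ^ 2 - cp ^ 2 * κ * γ ∧
    (ε ^ 2 - cp ^ 2 * κ * γ) * ‖grad v‖ ^ 2 ≤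
      (∫ x, κ * (2 * (u x) ^ 2 + γ * ((u x) ^ 2 - 1)) * (v x) ^ 2 ∂μ)
        + ε ^ 2 * ‖grad v‖ ^ 2 + σ * ‖Rm v‖ ^ 2 :=
  stmt10_general μ grad Rm κ ε σ hκ hσ cp hcp H1z hpoin γ hγ0 hγc u v hv hint hint2
end
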